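/- arXiv:1108.5550 — 5 statements merged into one kernel-verified Lean document; each statement's English description precedes it below -/
import Mathlib

section
/- Let D be a bounded b-inner uniform domain in ℝⁿ, i.e., every pair of points z₁, z₂ ∈ D can be joined by a rectifiable arc γ ⊂ D with ℓ(γ) ≤ b·δ_D(z₁,z₂) and min{ℓ(γ[z₁,z]), ℓ(γ[z₂,z])} ≤ b·d_D(z) for all z ∈ γ. Let x₀ ∈ D satisfy d_D(x₀) = sup_{x∈D} d_D(x). Then D has the 4b²-carrot property with center x₀: every y ∈ D can be joined to x₀ by a rectifiable arc α ⊂ D with ℓ(α[y,x]) ≤ 4b²·d_D(x) for all x ∈ α. -/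
/-! Join `y` to `x₀` by an inner uniform arc `γ`. Every point of `γ` satisfies
`min (ℓ γ[0,t]) (ℓ γ[t,1]) ≤ b d(γ t) ≤ b d(x₀)`, so cutting `γ` at the last time `T` with
`ℓ γ[0,T] ≤ b d(x₀)` gives `ℓ γ ≤ 2b d(x₀)`. At a point with `ℓ γ[0,t] ≤ b d(γ t)` there is
nothing to prove; otherwise `|γ t - x₀| ≤ ℓ γ[t,1] ≤ b d(γ t)`, hence `d(x₀) ≤ (1 + b) d(γ t)`
and `ℓ γ[0,t] ≤ ℓ γ ≤ 2b(1 + b) d(γ t) ≤ 4b² d(γ t)`. -/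

open Metric Set

/-- The internal metric `δ_D(x,y)`: the infimum of diameters of arcs in `D`
joining `x` and `y`. -/
noncomputable def innerDiamDist {n : ℕ} (D : Set (EuclideanSpace ℝ (Fin n)))
    (x y : EuclideanSpace ℝ (Fin n)) : ℝ :=
  sInf { d | ∃ γ : ℝ → EuclideanSpace ℝ (Fin n),
      ContinuousOn γ (Set.Icc 0 1) ∧ γ 0 = x ∧ γ 1 = y ∧
      (∀ t ∈ Set.Icc (0:ℝ) 1, γ t ∈ D) ∧ d = Metric.diam (γ '' Set.Icc 0 1) }

open scoped ENNReal Topology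

namespace eVariationOn

variable {α E : Type*} [PseudoEMetricSpace E] {M : ℝ≥0∞}

section LinearOrder

variable [LinearOrder α] [TopologicalSpace α] [OrderTopology α] [DenselyOrdered α]
  {f : α → E} {a c : α}

theorem Icc_le_of_forall_Ico_le (hf : ContinuousWithinAt f (Icc a c) c)
    (h : ∀ s ∈ Ico a c, eVariationOn f (Icc a s) ≤ M) : eVariationOn f (Icc a c) ≤ M := by
  rcases le_or_gt c a with hca | hac
  · simp [eVariationOn.subsingleton f (subsingleton_Icc_of_ge hca)]
  have hIcc : Icc a c ∩ Iic c = Icc a c := inter_eq_left.2 Icc_subset_Iic_self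
  have hIco : Icc a c ∩ Iio c = Ico a c := by ext; grind
  have hne : (𝓝[Icc a c ∩ Iio c] c).NeBot := hIco ▸ right_nhdsWithin_Ico_neBot hac
  have hvar := eVariationOn_inter_Iio_eq_inter_Iic_of_continuousWithinAt hne (hIcc ▸ hf)
  rw [hIcc, hIco] at hvar
  rw [← hvar]
  by_contra! hlt
  obtain ⟨_, -, v, hv, -, hM⟩ := exists_lt_eVariationOn_inter_Icc hlt
  refine (hM.trans_le ((eVariationOn.mono f ?_).trans (h v hv))).false
  exact fun x hx => ⟨hx.1.1, hx.2.2⟩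

theorem Icc_le_of_forall_Ioc_le (hf : ContinuousWithinAt f (Icc a c) a)
    (h : ∀ s ∈ Ioc a c, eVariationOn f (Icc s c) ≤ M) : eVariationOn f (Icc a c) ≤ M := by
  rcases le_or_gt c a with hca | hac
  · simp [eVariationOn.subsingleton f (subsingleton_Icc_of_ge hca)]
  have hIcc : Icc a c ∩ Ici a = Icc a c := inter_eq_left.2 Icc_subset_Ici_self
  have hIoc : Icc a c ∩ Ioi a = Ioc a c := by ext; grind
  have hne : (𝓝[Icc a c ∩ Ioi a] a).NeBot := hIoc ▸ left_nhdsWithin_Ioc_neBot hac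
  have hvar := eVariationOn_inter_Ioi_eq_inter_Ici_of_continuousWithinAt hne (hIcc ▸ hf)
  rw [hIcc, hIoc] at hvar
  rw [← hvar]
  by_contra! hlt
  obtain ⟨u, hu, _, -, -, hM⟩ := exists_lt_eVariationOn_inter_Icc hlt
  refine (hM.trans_le ((eVariationOn.mono f ?_).trans (h u hu))).false
  exact fun x hx => ⟨hx.2.1, hx.1.2⟩

end LinearOrder

variable [ConditionallyCompleteLinearOrder α] [TopologicalSpace α] [OrderTopology α]
  [DenselyOrdered α] {f : α → E} {a b : α}

theorem Icc_le_two_mul_of_forall_min_le (hab : a ≤ b) (hf : ContinuousOn f (Icc a b))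
    (h : ∀ t ∈ Icc a b, min (eVariationOn f (Icc a t)) (eVariationOn f (Icc t b)) ≤ M) :
    eVariationOn f (Icc a b) ≤ 2 * M := by
  set S := {t ∈ Icc a b | eVariationOn f (Icc a t) ≤ M}
  have haS : a ∈ S := ⟨left_mem_Icc.2 hab, by simp [eVariationOn.subsingleton]⟩
  have hSbdd : BddAbove S := bddAbove_Icc.mono fun t ht => ht.1
  set T := sSup S
  have hT : T ∈ Icc a b := ⟨le_csSup hSbdd haS, csSup_le ⟨a, haS⟩ fun t ht => ht.1.2⟩
  have hleft : eVariationOn f (Icc a T) ≤ M := by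
    refine Icc_le_of_forall_Ico_le ((hf T hT).mono (Icc_subset_Icc_right hT.2))
      fun s hs => ?_
    obtain ⟨s', hs'S, hss'⟩ := exists_lt_of_lt_csSup ⟨a, haS⟩ hs.2
    exact (eVariationOn.mono f (Icc_subset_Icc_right hss'.le)).trans hs'S.2
  have hright : eVariationOn f (Icc T b) ≤ M := by
    refine Icc_le_of_forall_Ioc_le ((hf T hT).mono (Icc_subset_Icc_left hT.1))
      fun s hs => ?_
    have hs' : s ∈ Icc a b := ⟨hT.1.trans hs.1.le, hs.2⟩
    have hsS : s ∉ S := fun hsS => (le_csSup hSbdd hsS).not_gt hs.1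
    exact (min_le_iff.1 (h s hs')).resolve_left fun hle => hsS ⟨hs', hle⟩
  calc eVariationOn f (Icc a b)
      = eVariationOn f (Icc a T) + eVariationOn f (Icc T b) := by
        simpa using (eVariationOn.Icc_add_Icc f (s := univ) hT.1 hT.2 (mem_univ T)).symm
    _ ≤ M + M := add_le_add hleft hright
    _ = 2 * M := (two_mul M).symm

end eVariationOn

theorem eVariationOn_Icc_zero_le_four_mul_sq_infDist {E : Type*} [PseudoMetricSpace E]
    {s : Set E} {γ : ℝ → E} {x₀ : E} {b : ℝ} (hb : 1 ≤ b) (hγ : ContinuousOn γ (Icc 0 1))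
    (hγ1 : γ 1 = x₀) (hmax : ∀ t ∈ Icc (0:ℝ) 1, infDist (γ t) s ≤ infDist x₀ s)
    (hmin : ∀ t ∈ Icc (0:ℝ) 1, min (eVariationOn γ (Icc 0 t)) (eVariationOn γ (Icc t 1)) ≤
      ENNReal.ofReal (b * infDist (γ t) s)) :
    ∀ t ∈ Icc (0:ℝ) 1, eVariationOn γ (Icc 0 t) ≤ ENNReal.ofReal (4 * b ^ 2 * infDist (γ t) s) := by
  intro t ht
  set d := infDist (γ t) s
  set d₀ := infDist x₀ s
  have hb0 : 0 ≤ b := zero_le_one.trans hb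
  have hd : 0 ≤ d := infDist_nonneg
  have htotal : eVariationOn γ (Icc 0 1) ≤ ENNReal.ofReal (2 * b * d₀) := by
    have := eVariationOn.Icc_le_two_mul_of_forall_min_le (M := ENNReal.ofReal (b * d₀))
      zero_le_one hγ fun t ht =>
        (hmin t ht).trans (ENNReal.ofReal_le_ofReal (mul_le_mul_of_nonneg_left (hmax t ht) hb0))
    rwa [mul_assoc, ENNReal.ofReal_mul zero_le_two, ENNReal.ofReal_ofNat]
  rcases min_le_iff.1 (hmin t ht) with hstart | hend
  · exact hstart.trans (ENNReal.ofReal_le_ofReal (mul_le_mul_of_nonneg_right (by nlinarith) hd))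
  · have hdist : dist (γ t) x₀ ≤ b * d := (edist_le_ofReal (mul_nonneg hb0 hd)).1
      (hγ1 ▸ (eVariationOn.edist_le γ (s := Icc t 1) ⟨le_rfl, ht.2⟩ ⟨ht.2, le_rfl⟩).trans hend)
    have hd₀d : d₀ ≤ (1 + b) * d := by
      linarith [infDist_le_infDist_add_dist (x := x₀) (y := γ t) (s := s), dist_comm x₀ (γ t)]
    calc eVariationOn γ (Icc 0 t) ≤ eVariationOn γ (Icc 0 1) :=
          eVariationOn.mono γ (Icc_subset_Icc_right ht.2)
      _ ≤ ENNReal.ofReal (2 * b * d₀) := htotal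
      _ ≤ ENNReal.ofReal (4 * b ^ 2 * d) := ENNReal.ofReal_le_ofReal <| by
          nlinarith [mul_le_mul_of_nonneg_left hd₀d (mul_nonneg zero_le_two hb0),
            mul_nonneg (mul_nonneg hb0 hd) (sub_nonneg.2 hb)]

theorem stmt6_general {n : ℕ} (D : Set (EuclideanSpace ℝ (Fin n)))
    (b : ℝ) (hb : 1 ≤ b)
    (hinner : ∀ z₁ ∈ D, ∀ z₂ ∈ D, ∃ γ : ℝ → EuclideanSpace ℝ (Fin n),
      ContinuousOn γ (Icc 0 1) ∧ γ 0 = z₁ ∧ γ 1 = z₂ ∧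
      (∀ t ∈ Icc (0:ℝ) 1, γ t ∈ D) ∧
      eVariationOn γ (Icc 0 1) ≤ ENNReal.ofReal (b * innerDiamDist D z₁ z₂) ∧
      ∀ t ∈ Icc (0:ℝ) 1,
        min (eVariationOn γ (Icc 0 t)) (eVariationOn γ (Icc t 1)) ≤
          ENNReal.ofReal (b * infDist (γ t) Dᶜ))
    (x₀ : EuclideanSpace ℝ (Fin n)) (hx₀ : x₀ ∈ D)
    (hmax : ∀ x ∈ D, infDist x Dᶜ ≤ infDist x₀ Dᶜ) :
    ∀ y ∈ D, ∃ α : ℝ → EuclideanSpace ℝ (Fin n),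
      ContinuousOn α (Icc 0 1) ∧ α 0 = y ∧ α 1 = x₀ ∧
      (∀ t ∈ Icc (0:ℝ) 1, α t ∈ D) ∧
      ∀ t ∈ Icc (0:ℝ) 1,
        eVariationOn α (Icc 0 t) ≤ ENNReal.ofReal (4 * b ^ 2 * infDist (α t) Dᶜ) := by
  intro y hy
  obtain ⟨γ, hγc, hγ0, hγ1, hγD, -, hγmin⟩ := hinner y hy x₀ hx₀
  exact ⟨γ, hγc, hγ0, hγ1, hγD, eVariationOn_Icc_zero_le_four_mul_sq_infDist hb hγc hγ1
    (fun t ht => hmax _ (hγD t ht)) hγmin⟩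

/-- A bounded `b`-inner uniform domain has the `4b²`-carrot property with center a
point `x₀` of maximal distance to the boundary. -/
theorem stmt6 {n : ℕ} (D : Set (EuclideanSpace ℝ (Fin n)))
    (hD : IsOpen D) (hDconn : IsConnected D) (hproper : Dᶜ.Nonempty)
    (hbdd : Bornology.IsBounded D) (b : ℝ) (hb : 1 ≤ b)
    (hinner : ∀ z₁ ∈ D, ∀ z₂ ∈ D, ∃ γ : ℝ → EuclideanSpace ℝ (Fin n),
      ContinuousOn γ (Icc 0 1) ∧ γ 0 = z₁ ∧ γ 1 = z₂ ∧
      (∀ t ∈ Icc (0:ℝ) 1, γ t ∈ D) ∧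
      eVariationOn γ (Icc 0 1) ≤ ENNReal.ofReal (b * innerDiamDist D z₁ z₂) ∧
      ∀ t ∈ Icc (0:ℝ) 1,
        min (eVariationOn γ (Icc 0 t)) (eVariationOn γ (Icc t 1)) ≤
          ENNReal.ofReal (b * infDist (γ t) Dᶜ))
    (x₀ : EuclideanSpace ℝ (Fin n)) (hx₀ : x₀ ∈ D)
    (hmax : ∀ x ∈ D, infDist x Dᶜ ≤ infDist x₀ Dᶜ) :
    ∀ y ∈ D, ∃ α : ℝ → EuclideanSpace ℝ (Fin n),
      ContinuousOn α (Icc 0 1) ∧ α 0 = y ∧ α 1 = x₀ ∧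
      (∀ t ∈ Icc (0:ℝ) 1, α t ∈ D) ∧
      ∀ t ∈ Icc (0:ℝ) 1,
        eVariationOn α (Icc 0 t) ≤ ENNReal.ofReal (4 * b ^ 2 * infDist (α t) Dᶜ) :=
  stmt6_general D b hb hinner x₀ hx₀ hmax
end

section
/- Let G₁ = ℍ⁺ \ (0, (8c−1)i] for a constant c ≥ 1, where ℍ⁺ is the upper half-plane in ℂ and (0, (8c−1)i] denotes the vertical segment {ti : 0 < t ≤ 8c−1}. Then G₁ is a 4-John domain: there exists a center point such that every z ∈ G₁ can be joined to it by a rectifiable arc γ ⊂ G₁ with ℓ(γ[z, w]) ≤ 4·d_{G₁}(w) for all w ∈ γ (with the center taken to be ∞, i.e., carrot arcs going to infinity). -/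
/-!
From `z` walk off to `∞` along the diagonal ray `z + t(±1 + i)`, the sign chosen so that the ray
moves away from the imaginary axis. At time `t` the ray is at height `> t` and at horizontal
distance `≥ t` from the imaginary axis, and `∂G₁` lies in the union of the real and imaginary axes,
so `d_{G₁}(γ t) ≥ t`, while the arc `γ[0, t]` has length `√2 t`.
-/

open Metric Set

/-- The domain `G₁ = ℍ⁺ \ (0, (8c-1)i]`: the upper half-plane with the vertical
segment `{ti : 0 < t ≤ 8c - 1}` removed. -/
def JohnG1 (c : ℝ) : Set ℂ :=
  {z | 0 < z.im} \ {z | z.re = 0 ∧ 0 < z.im ∧ z.im ≤ 8 * c - 1}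

open Filter Complex

lemma LipschitzWith.eVariationOn_Icc_le {E : Type*} [PseudoEMetricSpace E] {f : ℝ → E}
    {K : NNReal} (hf : LipschitzWith K f) (a b : ℝ) :
    eVariationOn f (Icc a b) ≤ K * ENNReal.ofReal (b - a) := by
  simpa [eVariationOn_id_Icc] using
    (hf.lipschitzOnWith (s := univ)).comp_eVariationOn_le (g := id) (mapsTo_univ _ (Icc a b))

section Ray

variable {E : Type*} [NormedAddCommGroup E] [NormedSpace ℝ E]

lemma lipschitzWith_const_add_smul (z w : E) : LipschitzWith ‖w‖₊ fun t : ℝ => z + t • w :=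
  LipschitzWith.of_dist_le_mul fun a b => by
    rw [dist_add_left, dist_eq_norm, ← sub_smul, norm_smul, mul_comm, coe_nnnorm, Real.dist_eq,
      Real.norm_eq_abs]

lemma tendsto_norm_const_add_smul_atTop (z : E) {w : E} (hw : w ≠ 0) :
    Tendsto (fun t : ℝ => ‖z + t • w‖) atTop atTop := by
  refine tendsto_atTop_mono (fun t => ?_) <|
    tendsto_atTop_add_const_right _ (-‖z‖) (tendsto_id.atTop_mul_const (norm_pos_iff.2 hw))
  calc id t * ‖w‖ + -‖z‖ ≤ ‖t • w‖ - ‖z‖ := by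
        rw [norm_smul, Real.norm_eq_abs, id, ← sub_eq_add_neg]
        gcongr
        exact le_abs_self t
    _ ≤ ‖z + t • w‖ := by
        simpa [add_comm] using norm_sub_norm_le (t • w) (-z)

end Ray

lemma compl_JohnG1_subset (c : ℝ) : (JohnG1 c)ᶜ ⊆ {w | w.im ≤ 0} ∪ {w | w.re = 0} := by
  intro w hw
  by_contra h
  simp only [mem_union, mem_ofPred_eq, not_or, not_le] at h
  exact hw ⟨h.1, fun hseg => h.2 hseg.1⟩

lemma le_infDist_compl_JohnG1 {c r : ℝ} {p : ℂ} (him : r ≤ p.im) (hre : r ≤ |p.re|) :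
    r ≤ infDist p (JohnG1 c)ᶜ := by
  refine (le_infDist ⟨0, by simp [JohnG1]⟩).2 fun w hw => ?_
  rcases compl_JohnG1_subset c hw with hw | hw
  · calc r ≤ (p - w).im := by simp only [mem_ofPred_eq] at hw; rw [sub_im]; linarith
      _ ≤ dist p w := dist_eq_norm p w ▸ (le_abs_self _).trans (abs_im_le_norm _)
  · calc r ≤ |(p - w).re| := by simp only [mem_ofPred_eq] at hw; rwa [sub_re, hw, sub_zero]
      _ ≤ dist p w := dist_eq_norm p w ▸ abs_re_le_norm _

lemma mem_JohnG1_of_re_ne_zero (c : ℝ) {p : ℂ} (him : 0 < p.im) (hre : p.re ≠ 0) :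
    p ∈ JohnG1 c :=
  ⟨him, fun hseg => hre hseg.1⟩

lemma exists_abs_eq_one_mul_nonneg (x : ℝ) : ∃ s : ℝ, |s| = 1 ∧ 0 ≤ s * x := by
  rcases le_total 0 x with hx | hx
  · exact ⟨1, by simp, by simpa⟩
  · exact ⟨-1, by simp, by simpa⟩

lemma le_abs_add_mul {x s t : ℝ} (hs : |s| = 1) (hsx : 0 ≤ s * x) :
    t ≤ |x + t * s| := by
  have hs2 : s * s = 1 := by rw [← abs_mul_abs_self, hs, one_mul]
  calc t ≤ s * x + t := by linarith
    _ ≤ |s * x + t| := le_abs_self _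
    _ = |x + t * s| := by
        rw [← one_mul |x + t * s|, ← hs, ← abs_mul]
        congr 1
        linear_combination -t * hs2

theorem stmt10_general (c : ℝ) :
    ∀ z ∈ JohnG1 c, ∃ γ : ℝ → ℂ,
      γ 0 = z ∧ ContinuousOn γ (Ici 0) ∧
      (∀ t ∈ Ici (0:ℝ), γ t ∈ JohnG1 c) ∧
      Filter.Tendsto (fun t => ‖γ t‖) Filter.atTop Filter.atTop ∧
      ∀ t ∈ Ici (0:ℝ),
        eVariationOn γ (Icc 0 t) ≤ ENNReal.ofReal (4 * infDist (γ t) (JohnG1 c)ᶜ) := by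
  intro z hz
  obtain ⟨s, hs, hsz⟩ := exists_abs_eq_one_mul_nonneg z.re
  set w : ℂ := s + I
  have hw : ‖w‖ ≤ 2 := (norm_add_le _ _).trans (by simp [hs]; norm_num)
  have him (t : ℝ) : t < (z + t • w).im := by simpa [w] using hz.1.out
  have hre (t : ℝ) : t ≤ |(z + t • w).re| := by simpa [w] using le_abs_add_mul hs hsz
  have hdist (t : ℝ) : t ≤ infDist (z + t • w) (JohnG1 c)ᶜ :=
    le_infDist_compl_JohnG1 (him t).le (hre t)
  refine ⟨fun t => z + t • w, by simp, by fun_prop, fun t ht => ?_,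
    tendsto_norm_const_add_smul_atTop z (by simp [w, Complex.ext_iff]), fun t ht => ?_⟩
  · rcases (mem_Ici.1 ht).eq_or_lt with rfl | ht
    · simpa using hz
    · exact mem_JohnG1_of_re_ne_zero c (ht.trans (him t)) (abs_pos.1 (ht.trans_le (hre t)))
  · calc eVariationOn (fun t => z + t • w) (Icc 0 t) ≤ ‖w‖₊ * ENNReal.ofReal (t - 0) :=
          (lipschitzWith_const_add_smul z w).eVariationOn_Icc_le 0 t
      _ = ENNReal.ofReal (‖w‖ * t) := by
          rw [sub_zero, ENNReal.ofReal_mul (norm_nonneg w), ← coe_nnnorm, ENNReal.ofReal_coe_nnreal]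
      _ ≤ ENNReal.ofReal (4 * infDist (z + t • w) (JohnG1 c)ᶜ) :=
          ENNReal.ofReal_le_ofReal (by nlinarith [hdist t, mem_Ici.1 ht])

/-- `G₁ = ℍ⁺ \ (0,(8c-1)i]` is a `4`-John domain with center `∞`: every point can be
joined to `∞` by a `4`-carrot arc in `G₁`. -/
theorem stmt10 (c : ℝ) (hc : 1 ≤ c) :
    ∀ z ∈ JohnG1 c, ∃ γ : ℝ → ℂ,
      γ 0 = z ∧ ContinuousOn γ (Ici 0) ∧
      (∀ t ∈ Ici (0:ℝ), γ t ∈ JohnG1 c) ∧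
      Filter.Tendsto (fun t => ‖γ t‖) Filter.atTop Filter.atTop ∧
      ∀ t ∈ Ici (0:ℝ),
        eVariationOn γ (Icc 0 t) ≤ ENNReal.ofReal (4 * infDist (γ t) (JohnG1 c)ᶜ) :=
  stmt10_general c
end

section
/- Let G be a proper subdomain of ℝⁿ and γ a rectifiable arc in G from x₁ to x₂ which is a μ-carrot arc with center x₂ (i.e., ℓ(γ[x₁,u]) ≤ μ·d_G(u) for all u ∈ γ, μ ≥ 1). Then the quasihyperbolic length of γ satisfies ℓ_{k_G}(γ) ≤ 4μ·log(1 + 2ℓ(γ)/d_G(x₁)). -/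
open Metric Set MeasureTheory intervalIntegral

/-!
Write `ℓ(t)` for the length of `γ` on `[0, t]`. Since `d_G` is `1`-Lipschitz and
`|γ t - γ 0| ≤ ℓ(t)`, the carrot condition `ℓ(t) ≤ μ d_G(γ t)` gives
`2 ℓ(t) + d_G(x₁) ≤ 4μ d_G(γ t)`. Hence the quasihyperbolic integrand `ℓ'/d_G` is at most
`4μ ℓ'/(2ℓ + d_G(x₁)) = 2μ (log (2ℓ + d_G(x₁)))'`, whose integral is
`2μ log (1 + 2ℓ(γ)/d_G(x₁))`. As `ℓ` is merely absolutely continuous, this last step uses that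
the integral of the a.e. derivative of a monotone function is at most its increment.
-/

theorem IntervalIntegrable.div_continuousOn {f d : ℝ → ℝ} {a b : ℝ}
    (hf : IntervalIntegrable f volume a b) (hd : ContinuousOn d (uIcc a b))
    (hd0 : ∀ t ∈ uIcc a b, d t ≠ 0) : IntervalIntegrable (fun t => f t / d t) volume a b := by
  simpa only [div_eq_mul_inv] using hf.mul_continuousOn (g := fun t => (d t)⁻¹) (hd.inv₀ hd0)

theorem IntervalIntegrable.of_div_continuousOn {f d : ℝ → ℝ} {a b : ℝ}
    (hfd : IntervalIntegrable (fun t => f t / d t) volume a b) (hd : ContinuousOn d (uIcc a b))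
    (hd0 : ∀ t ∈ uIcc a b, d t ≠ 0) : IntervalIntegrable f volume a b :=
  (hfd.mul_continuousOn hd).congr fun t ht => div_mul_cancel₀ _ (hd0 t (uIoc_subset_uIcc ht))

theorem IntervalIntegrable.monotoneOn_integral_of_nonneg {g : ℝ → ℝ} {a b : ℝ}
    (hg : IntervalIntegrable g volume a b) (hg0 : ∀ t ∈ Icc a b, 0 ≤ g t) :
    MonotoneOn (fun t => ∫ s in a..t, g s) (Icc a b) := by
  intro u hu v hv huv
  have hgu := hg.mono_set (uIcc_subset_uIcc_left (Icc_subset_uIcc hu))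
  have hgv := hg.mono_set (uIcc_subset_uIcc_left (Icc_subset_uIcc hv))
  have hsub := integral_interval_sub_left hgv hgu
  have hnonneg : 0 ≤ ∫ s in u..v, g s :=
    integral_nonneg huv fun s hs => hg0 s ⟨hu.1.trans hs.1, hs.2.trans hv.2⟩
  show ∫ s in a..u, g s ≤ ∫ s in a..v, g s
  linarith

theorem integral_div_integral_add_le_log {g : ℝ → ℝ} {a b c : ℝ} (hab : a ≤ b)
    (hg : IntervalIntegrable g volume a b) (hg0 : ∀ t ∈ Icc a b, 0 ≤ g t) (hc : 0 < c) :
    ∫ t in a..b, g t / ((∫ s in a..t, g s) + c) ≤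
      Real.log ((∫ s in a..b, g s) + c) - Real.log c := by
  set F : ℝ → ℝ := fun t => ∫ s in a..t, g s
  have hFmono := hg.monotoneOn_integral_of_nonneg hg0
  have hFpos : ∀ t ∈ uIcc a b, 0 < F t + c := by
    intro t ht
    rw [uIcc_of_le hab] at ht
    have hFa := hFmono (left_mem_Icc.2 hab) ht ht.1
    simp only [integral_same] at hFa
    linarith
  have hlogF : MonotoneOn (fun t => Real.log (F t + c)) (uIcc a b) := fun u hu v hv huv =>
    Real.log_le_log (hFpos u hu) (by
      rw [uIcc_of_le hab] at hu hv
      linarith [hFmono hu hv huv])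
  have hderiv : ∀ᵐ t, t ∈ uIoc a b →
      deriv (fun t => Real.log (F t + c)) t = g t / (F t + c) := by
    filter_upwards [hg.ae_hasDerivAt_integral] with t ht htab
    have htab' := uIoc_subset_uIcc htab
    exact (((ht htab' a left_mem_uIcc).add_const c).log (hFpos t htab').ne').deriv
  have hlog_le := hlogF left_mem_uIcc right_mem_uIcc hab
  calc ∫ t in a..b, g t / (F t + c)
      = ∫ t in a..b, deriv (fun t => Real.log (F t + c)) t := (integral_congr_ae hderiv).symm
    _ ≤ Real.log (F b + c) - Real.log (F a + c) := by
      have hmem := hlogF.intervalIntegral_deriv_mem_uIcc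
      rw [uIcc_of_le (sub_nonneg.2 hlog_le)] at hmem
      exact hmem.2
    _ = Real.log (F b + c) - Real.log c := by simp [F]

theorem integral_div_le_mul_log_of_integral_le {g d : ℝ → ℝ} {a b c r K : ℝ} (hab : a ≤ b)
    (hg : IntervalIntegrable g volume a b) (hg0 : ∀ t ∈ Icc a b, 0 ≤ g t) (hc : 0 < c)
    (hr : 0 < r) (hK : 0 ≤ K) (hgd : ∀ t ∈ Icc a b, r * (∫ s in a..t, g s) + c ≤ K * d t) :
    ∫ t in a..b, g t / d t ≤ K / r * Real.log (1 + r * (∫ t in a..b, g t) / c) := by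
  set F : ℝ → ℝ := fun t => ∫ s in a..t, g s
  have hF0 : ∀ t ∈ Icc a b, 0 ≤ F t := fun t ht =>
    integral_nonneg ht.1 fun s hs => hg0 s ⟨hs.1, hs.2.trans ht.2⟩
  by_cases hgd_int : IntervalIntegrable (fun t => g t / d t) volume a b
  case neg =>
    rw [integral_undef hgd_int]
    have hFb := hF0 b (right_mem_Icc.2 hab)
    exact mul_nonneg (by positivity) (Real.log_nonneg (le_add_of_nonneg_right (by positivity)))
  have hrg : IntervalIntegrable (fun t => r * g t) volume a b := hg.const_mul r
  have hrF : ∀ t, ∫ s in a..t, r * g s = r * F t := fun t => integral_const_mul r g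
  have hlog := integral_div_integral_add_le_log hab hrg (fun t ht => mul_nonneg hr.le (hg0 t ht)) hc
  simp only [hrF] at hlog
  have hden : ∀ t ∈ uIcc a b, 0 < r * F t + c := by
    intro t ht
    rw [uIcc_of_le hab] at ht
    have hFt := hF0 t ht
    positivity
  have hrhs_int : IntervalIntegrable (fun t => r * g t / (r * F t + c)) volume a b :=
    hrg.div_continuousOn (((continuousOn_primitive_interval' hg left_mem_uIcc).const_smul r).add
      continuousOn_const) fun t ht => (hden t ht).ne'
  calc ∫ t in a..b, g t / d t
      ≤ ∫ t in a..b, K / r * (r * g t / (r * F t + c)) := by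
        refine integral_mono_on hab hgd_int (hrhs_int.const_mul _) fun t ht => ?_
        have hden_t := hden t (Icc_subset_uIcc ht)
        have hd_t : 0 < d t := pos_of_mul_pos_right (hden_t.trans_le (hgd t ht)) hK
        rw [show K / r * (r * g t / (r * F t + c)) = K * g t / (r * F t + c) by field_simp,
          div_le_div_iff₀ hd_t hden_t]
        nlinarith [mul_nonneg (hg0 t ht) (sub_nonneg.2 (hgd t ht))]
    _ = K / r * ∫ t in a..b, r * g t / (r * F t + c) := integral_const_mul _ _
    _ ≤ K / r * (Real.log (r * F b + c) - Real.log c) := by gcongr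
    _ = K / r * Real.log (1 + r * F b / c) := by
        rw [← Real.log_div (hden b right_mem_uIcc).ne' hc.ne']
        congr 2
        field_simp
        ring

theorem dist_le_integral_norm_deriv {E : Type*} [NormedAddCommGroup E] [NormedSpace ℝ E]
    {f : ℝ → E} {a b : ℝ} (hab : a ≤ b) (hf : ∀ t ∈ Icc a b, DifferentiableAt ℝ f t)
    (hf' : IntervalIntegrable (fun t => ‖deriv f t‖) volume a b) :
    dist (f b) (f a) ≤ ∫ t in a..b, ‖deriv f t‖ := by
  rw [dist_eq_norm]
  exact norm_sub_le_integral_of_norm_deriv_le_of_le hab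
    (fun t ht => (hf t ht).continuousAt.continuousWithinAt)
    (fun t ht => (hf t (Ioo_subset_Icc_self ht)).differentiableWithinAt)
    (ae_of_all _ fun _ _ => le_rfl) hf'

theorem two_mul_add_infDist_le_of_le_mul_infDist {X : Type*} [PseudoMetricSpace X] {s : Set X}
    {x y : X} {ℓ μ : ℝ} (hμ : 1 ≤ μ) (hyx : dist y x ≤ ℓ) (hℓ : ℓ ≤ μ * infDist y s) :
    2 * ℓ + infDist x s ≤ 4 * μ * infDist y s := by
  have hLip : infDist x s ≤ infDist y s + dist x y := infDist_le_infDist_add_dist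
  rw [dist_comm] at hLip
  nlinarith [mul_nonneg (sub_nonneg.2 hμ) (infDist_nonneg : 0 ≤ infDist y s)]

theorem stmt15_general {n : ℕ} (G : Set (EuclideanSpace ℝ (Fin n)))
    (hG : IsOpen G) (hproper : Gᶜ.Nonempty)
    (μ : ℝ) (hμ : 1 ≤ μ)
    (γ : ℝ → EuclideanSpace ℝ (Fin n))
    (hdiff : ∀ t ∈ Icc (0:ℝ) 1, DifferentiableAt ℝ γ t)
    (hin : ∀ t ∈ Icc (0:ℝ) 1, γ t ∈ G)
    (hcarrot : ∀ t ∈ Icc (0:ℝ) 1,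
      (∫ s in (0:ℝ)..t, ‖deriv γ s‖) ≤ μ * infDist (γ t) Gᶜ) :
    (∫ t in (0:ℝ)..1, ‖deriv γ t‖ / infDist (γ t) Gᶜ) ≤
      4 * μ * Real.log (1 + 2 * (∫ t in (0:ℝ)..1, ‖deriv γ t‖) / infDist (γ 0) Gᶜ) := by
  have hγ : ContinuousOn γ (Icc 0 1) := fun t ht => (hdiff t ht).continuousAt.continuousWithinAt
  have hd : ContinuousOn (fun t => infDist (γ t) Gᶜ) (uIcc 0 1) := by
    rw [uIcc_of_le zero_le_one]
    exact (continuous_infDist_pt _).comp_continuousOn hγ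
  have hd_pos : ∀ t ∈ Icc (0:ℝ) 1, 0 < infDist (γ t) Gᶜ := fun t ht =>
    (hG.isClosed_compl.notMem_iff_infDist_pos hproper).1 (not_not.2 (hin t ht))
  by_cases hg : IntervalIntegrable (fun t => ‖deriv γ t‖) volume 0 1
  · have hdisp : ∀ t ∈ Icc (0:ℝ) 1, dist (γ t) (γ 0) ≤ ∫ s in (0:ℝ)..t, ‖deriv γ s‖ :=
      fun t ht => dist_le_integral_norm_deriv ht.1
        (fun s hs => hdiff s ⟨hs.1, hs.2.trans ht.2⟩)
        (hg.mono_set (uIcc_subset_uIcc_left (Icc_subset_uIcc ht)))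
    have hd₀ := hd_pos 0 (left_mem_Icc.2 zero_le_one)
    have hlength : 0 ≤ ∫ t in (0:ℝ)..1, ‖deriv γ t‖ :=
      integral_nonneg zero_le_one fun t _ => norm_nonneg _
    calc _ ≤ 4 * μ / 2 * Real.log (1 + 2 * (∫ t in (0:ℝ)..1, ‖deriv γ t‖) / infDist (γ 0) Gᶜ) :=
          integral_div_le_mul_log_of_integral_le zero_le_one hg (fun t _ => norm_nonneg _)
            hd₀ two_pos (by positivity) fun t ht =>
              two_mul_add_infDist_le_of_le_mul_infDist hμ (hdisp t ht) (hcarrot t ht)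
      _ ≤ _ := by
          gcongr
          · exact Real.log_nonneg (le_add_of_nonneg_right (by positivity))
          · linarith
  · -- both integrals take the junk value `0`
    rw [integral_undef hg, integral_undef fun h => hg (h.of_div_continuousOn hd fun t ht =>
      (hd_pos t (by rwa [uIcc_of_le zero_le_one] at ht)).ne')]
    simp

/-- For a `μ`-carrot arc `γ` in `G` from `x₁ = γ 0` to `x₂ = γ 1` with center `x₂`,
the quasihyperbolic length satisfies `ℓ_{k_G}(γ) ≤ 4μ·log(1 + 2ℓ(γ)/d_G(x₁))`. -/
theorem stmt15 {n : ℕ} (G : Set (EuclideanSpace ℝ (Fin n)))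
    (hG : IsOpen G) (hGconn : IsConnected G) (hproper : Gᶜ.Nonempty)
    (μ : ℝ) (hμ : 1 ≤ μ)
    (γ : ℝ → EuclideanSpace ℝ (Fin n))
    (hcont : ContinuousOn γ (Icc 0 1))
    (hdiff : ∀ t ∈ Icc (0:ℝ) 1, DifferentiableAt ℝ γ t)
    (hin : ∀ t ∈ Icc (0:ℝ) 1, γ t ∈ G)
    (hcarrot : ∀ t ∈ Icc (0:ℝ) 1,
      (∫ s in (0:ℝ)..t, ‖deriv γ s‖) ≤ μ * infDist (γ t) Gᶜ) :
    (∫ t in (0:ℝ)..1, ‖deriv γ t‖ / infDist (γ t) Gᶜ) ≤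
      4 * μ * Real.log (1 + 2 * (∫ t in (0:ℝ)..1, ‖deriv γ t‖) / infDist (γ 0) Gᶜ) :=
  stmt15_general G hG hproper μ hμ γ hdiff hin hcarrot
end

section
/- Let G be a proper subdomain of ℝⁿ and β an arc in G with endpoints w₁ and w₂, with w₀ ∈ β a point where d_G attains its infimum over β. If k_G(w₁, w₂) ≥ 3, then diam(β) > (2/3)·d_G(w₀). -/
/-!
Every point of the segment `[x, y]` lies at distance at least `d_G(x) - |x - y|` from `∂G`, so
integrating along it gives `k_G(x, y) ≤ |x - y| / (d_G(x) - |x - y|)`. If `diam β ≤ (2/3) d_G(w₀)`,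
then `|w₁ - w₂| ≤ (2/3) d_G(w₀) ≤ (2/3) d_G(w₁)`, and the bound for `k_G(w₁, w₂)` is at most `2`.
-/

open Metric Set

/-- The quasihyperbolic length of a path `γ` (parametrized on `[0,1]`) in `G`. -/
noncomputable def qhLen {n : ℕ} (G : Set (EuclideanSpace ℝ (Fin n)))
    (γ : ℝ → EuclideanSpace ℝ (Fin n)) : ℝ :=
  ∫ t in (0:ℝ)..1, ‖deriv γ t‖ / infDist (γ t) Gᶜ

/-- The quasihyperbolic distance between `x` and `y` in `G`: the infimum of
quasihyperbolic lengths of differentiable paths in `G` joining `x` and `y`. -/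
noncomputable def qhDist {n : ℕ} (G : Set (EuclideanSpace ℝ (Fin n)))
    (x y : EuclideanSpace ℝ (Fin n)) : ℝ :=
  sInf { L | ∃ γ : ℝ → EuclideanSpace ℝ (Fin n),
      γ 0 = x ∧ γ 1 = y ∧ (∀ t ∈ Set.Icc (0:ℝ) 1, γ t ∈ G) ∧
      (∀ t ∈ Set.Icc (0:ℝ) 1, DifferentiableAt ℝ γ t) ∧ L = qhLen G γ }

section

open AffineMap (lineMap)

variable {n : ℕ} {G : Set (EuclideanSpace ℝ (Fin n))}

lemma qhLen_nonneg (γ : ℝ → EuclideanSpace ℝ (Fin n)) : 0 ≤ qhLen G γ :=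
  intervalIntegral.integral_nonneg zero_le_one fun _ _ => div_nonneg (norm_nonneg _) infDist_nonneg

lemma qhDist_le_qhLen {x y : EuclideanSpace ℝ (Fin n)} {γ : ℝ → EuclideanSpace ℝ (Fin n)}
    (h0 : γ 0 = x) (h1 : γ 1 = y) (hmem : ∀ t ∈ Icc (0:ℝ) 1, γ t ∈ G)
    (hdiff : ∀ t ∈ Icc (0:ℝ) 1, DifferentiableAt ℝ γ t) :
    qhDist G x y ≤ qhLen G γ :=
  csInf_le ⟨0, by rintro L ⟨γ', -, -, -, -, rfl⟩; exact qhLen_nonneg γ'⟩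
    ⟨γ, h0, h1, hmem, hdiff, rfl⟩

lemma sub_dist_le_infDist_lineMap (x y : EuclideanSpace ℝ (Fin n)) {t : ℝ}
    (ht : t ∈ Icc (0:ℝ) 1) :
    infDist x Gᶜ - dist x y ≤ infDist (lineMap x y t) Gᶜ := by
  have hclose : dist (lineMap x y t) x ≤ dist x y := by
    rw [dist_lineMap_left, Real.norm_of_nonneg ht.1]
    exact mul_le_of_le_one_left dist_nonneg ht.2
  have := infDist_le_infDist_add_dist (x := x) (y := lineMap x y t) (s := Gᶜ)
  rw [dist_comm] at this
  linarith

lemma qhLen_lineMap_le {x y : EuclideanSpace ℝ (Fin n)} (hxy : dist x y < infDist x Gᶜ) :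
    qhLen G (lineMap x y) ≤ dist x y / (infDist x Gᶜ - dist x y) := by
  have hbound : ∀ t ∈ uIoc (0:ℝ) 1, ‖‖deriv (lineMap x y) t‖ /
      infDist (lineMap x y t) Gᶜ‖ ≤ dist x y / (infDist x Gᶜ - dist x y) := by
    intro t ht
    rw [uIoc_of_le zero_le_one] at ht
    rw [AffineMap.hasDerivAt_lineMap.deriv, ← dist_eq_norm', norm_div,
      Real.norm_of_nonneg dist_nonneg, Real.norm_of_nonneg infDist_nonneg]
    exact div_le_div_of_nonneg_left dist_nonneg (sub_pos.2 hxy)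
      (sub_dist_le_infDist_lineMap x y (Ioc_subset_Icc_self ht))
  calc qhLen G (lineMap x y) ≤ |qhLen G (lineMap x y)| := le_abs_self _
    _ ≤ dist x y / (infDist x Gᶜ - dist x y) * |1 - 0| :=
      intervalIntegral.norm_integral_le_of_norm_le_const hbound
    _ = dist x y / (infDist x Gᶜ - dist x y) := by norm_num

theorem qhDist_le_of_dist_lt_infDist {x y : EuclideanSpace ℝ (Fin n)}
    (hxy : dist x y < infDist x Gᶜ) :
    qhDist G x y ≤ dist x y / (infDist x Gᶜ - dist x y) := by
  refine (qhDist_le_qhLen (AffineMap.lineMap_apply_zero x y) (AffineMap.lineMap_apply_one x y)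
    (fun t ht => ?_) (fun t _ => AffineMap.hasDerivAt_lineMap.differentiableAt)).trans
    (qhLen_lineMap_le hxy)
  have hpos : 0 < infDist (lineMap x y t) Gᶜ :=
    (sub_pos.2 hxy).trans_le (sub_dist_le_infDist_lineMap x y ht)
  exact notMem_compl_iff.1 fun hmem => hpos.ne' (infDist_zero_of_mem hmem)

end

theorem stmt18_general {n : ℕ} (G : Set (EuclideanSpace ℝ (Fin n)))
    (hG : IsOpen G) (hproper : Gᶜ.Nonempty)
    (β : ℝ → EuclideanSpace ℝ (Fin n))
    (hcont : ContinuousOn β (Icc 0 1))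
    (hin : ∀ t ∈ Icc (0:ℝ) 1, β t ∈ G)
    (t₀ : ℝ) (ht₀ : t₀ ∈ Icc (0:ℝ) 1)
    (hmin : ∀ t ∈ Icc (0:ℝ) 1, infDist (β t₀) Gᶜ ≤ infDist (β t) Gᶜ)
    (hk : 3 ≤ qhDist G (β 0) (β 1)) :
    (2 / 3) * infDist (β t₀) Gᶜ < Metric.diam (β '' Icc 0 1) := by
  by_contra! hdiam
  set d₀ := infDist (β t₀) Gᶜ
  have hd₀ : 0 < d₀ :=
    (hG.isClosed_compl.notMem_iff_infDist_pos hproper).1 (not_not_intro (hin t₀ ht₀))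
  have hβ0 : d₀ ≤ infDist (β 0) Gᶜ := hmin 0 (left_mem_Icc.2 zero_le_one)
  have hends : dist (β 0) (β 1) ≤ (2 / 3) * d₀ :=
    (dist_le_diam_of_mem ((isCompact_Icc.image_of_continuousOn hcont).isBounded)
      (mem_image_of_mem β (left_mem_Icc.2 zero_le_one))
      (mem_image_of_mem β (right_mem_Icc.2 zero_le_one))).trans hdiam
  have hk_le := qhDist_le_of_dist_lt_infDist (G := G)
    (by linarith : dist (β 0) (β 1) < infDist (β 0) Gᶜ)
  have hbound : dist (β 0) (β 1) / (infDist (β 0) Gᶜ - dist (β 0) (β 1)) ≤ 2 := by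
    rw [div_le_iff₀ (by linarith)]
    linarith
  linarith

/-- If `β` is an arc in `G` with endpoints `w₁ = β 0`, `w₂ = β 1`, `w₀ = β t₀`
minimizes `d_G` over `β`, and `k_G(w₁,w₂) ≥ 3`, then `diam(β) > (2/3)·d_G(w₀)`. -/
theorem stmt18 {n : ℕ} (G : Set (EuclideanSpace ℝ (Fin n)))
    (hG : IsOpen G) (hGconn : IsConnected G) (hproper : Gᶜ.Nonempty)
    (β : ℝ → EuclideanSpace ℝ (Fin n))
    (hcont : ContinuousOn β (Icc 0 1))
    (hin : ∀ t ∈ Icc (0:ℝ) 1, β t ∈ G)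
    (t₀ : ℝ) (ht₀ : t₀ ∈ Icc (0:ℝ) 1)
    (hmin : ∀ t ∈ Icc (0:ℝ) 1, infDist (β t₀) Gᶜ ≤ infDist (β t) Gᶜ)
    (hk : 3 ≤ qhDist G (β 0) (β 1)) :
    (2 / 3) * infDist (β t₀) Gᶜ < Metric.diam (β '' Icc 0 1) :=
  stmt18_general G hG hproper β hcont hin t₀ ht₀ hmin hk
end

section
/- Every open ball in ℝⁿ is a c-uniform domain for c = π/2: for any two points z₁, z₂ in the ball B there is a rectifiable arc γ ⊂ B joining them with ℓ(γ) ≤ (π/2)|z₁ − z₂| and min{ℓ(γ[z₁,z]), ℓ(γ[z₂,z])} ≤ (π/2)·d_B(z) for every z ∈ γ. -/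
/-!
The arc is the broken line `z₁ → p → z₂` through a pivot `p`. Let `m` be the midpoint of
`[z₁, z₂]`, `ρ = |z₁ - z₂| / 2` and `k = √(c² - 1)`. By Apollonius' theorem,
`|z₁ - p| + |p - z₂| ≤ c |z₁ - z₂|` as soon as `|p - m| ≤ k ρ`. So take `p = x₀` if
`|m - x₀| ≤ k ρ`, and otherwise the point of `[m, x₀]` at distance `k ρ` from `m`; there `k ≥ 1`
(i.e. `c ≥ √2`, and `π / 2 > √2`) gives `|zᵢ - p| ≤ c d_B(p)`. Since `d_B` is concave,
`d_B(z) ≥ s d_B(p)` at `z = (1 - s) zᵢ + s p`, which bounds the length `s |zᵢ - p|` of the arc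
from `zᵢ` to `z` by `c d_B(z)`.
-/

open Metric Set AffineMap
open scoped RealInnerProductSpace

lemma eVariationOn_of_subsingleton {α E : Type*} [LinearOrder α] [PseudoEMetricSpace E]
    [Subsingleton E] (f : α → E) (s : Set α) : eVariationOn f s = 0 :=
  eVariationOn.constant_on subsingleton_of_subsingleton

section BrokenLine

variable {E : Type*} [NormedAddCommGroup E] [NormedSpace ℝ E]

lemma sub_dist_le_infDist_compl_ball [Nontrivial E] (x₀ x : E) {r : ℝ} (hr : 0 ≤ r) :
    r - dist x x₀ ≤ infDist x (ball x₀ r)ᶜ := by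
  have hne : ((ball x₀ r)ᶜ).Nonempty :=
    (NormedSpace.sphere_nonempty.2 hr).mono sphere_disjoint_ball.subset_compl_right
  refine (le_infDist hne).2 fun y hy => ?_
  have : r ≤ dist y x₀ := not_lt.1 hy
  linarith [dist_triangle_left y x₀ x]

lemma eVariationOn_lineMap_Icc_le (a b : E) (s t : ℝ) :
    eVariationOn (lineMap a b : ℝ → E) (Icc s t) ≤ ENNReal.ofReal ((t - s) * dist a b) :=
  calc eVariationOn (lineMap a b ∘ id) (Icc s t)
      ≤ nndist a b * eVariationOn (id : ℝ → ℝ) (Icc s t) :=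
        (lipschitzWith_lineMap a b).lipschitzOnWith.comp_eVariationOn_le (mapsTo_id _)
    _ = ENNReal.ofReal ((t - s) * dist a b) := by
        rw [eVariationOn_id_Icc, mul_comm, ENNReal.ofReal_mul' dist_nonneg, ← edist_dist,
          edist_nndist]

lemma mul_sub_dist_le_sub_dist_lineMap {a p x₀ : E} {r s : ℝ} (ha : dist a x₀ ≤ r)
    (hs₀ : 0 ≤ s) (hs₁ : s ≤ 1) :
    s * (r - dist p x₀) ≤ r - dist (lineMap a p s) x₀ := by
  have hconv := (convexOn_dist x₀ convex_univ).2 (mem_univ a) (mem_univ p)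
    (sub_nonneg.2 hs₁) hs₀ (sub_add_cancel 1 s)
  simp only [smul_eq_mul, ← lineMap_apply_module] at hconv
  nlinarith

noncomputable def brokenLine (a p b : E) (t : ℝ) : E :=
  if t ≤ 1 / 2 then lineMap a p (2 * t) else lineMap p b (2 * t - 1)

variable {a p b : E} {t : ℝ}

lemma brokenLine_of_le_half (ht : t ≤ 1 / 2) : brokenLine a p b t = lineMap a p (2 * t) :=
  if_pos ht

lemma brokenLine_one_sub (a p b : E) (t : ℝ) :
    brokenLine a p b (1 - t) = brokenLine b p a t := by
  unfold brokenLine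
  split_ifs with h₁ h₂ h₂
  · obtain rfl : t = 1 / 2 := by linarith
    norm_num
  · rw [← lineMap_apply_one_sub]; ring_nf
  · rw [← lineMap_apply_one_sub]; ring_nf
  · linarith

@[simp] lemma brokenLine_zero (a p b : E) : brokenLine a p b 0 = a := by
  simp [brokenLine]

@[simp] lemma brokenLine_one (a p b : E) : brokenLine a p b 1 = b := by
  simpa using brokenLine_one_sub a p b 0

lemma continuous_brokenLine (a p b : E) : Continuous (brokenLine a p b) :=
  Continuous.if_le (by fun_prop) (by fun_prop) continuous_id continuous_const
    fun t ht => by rw [ht]; norm_num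

lemma brokenLine_mem {s : Set E} (hs : Convex ℝ s) (ha : a ∈ s) (hp : p ∈ s) (hb : b ∈ s)
    (ht : t ∈ Icc 0 1) : brokenLine a p b t ∈ s := by
  unfold brokenLine
  split_ifs with h
  · exact hs.lineMap_mem ha hp ⟨by linarith [ht.1], by linarith⟩
  · exact hs.lineMap_mem hp hb ⟨by linarith, by linarith [ht.2]⟩

lemma eVariationOn_brokenLine_Icc_zero_le (ht : t ∈ Icc 0 (1 / 2)) :
    eVariationOn (brokenLine a p b) (Icc 0 t) ≤ ENNReal.ofReal (2 * t * dist a p) :=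
  calc eVariationOn (brokenLine a p b) (Icc 0 t)
      = eVariationOn (lineMap a p ∘ (2 * ·)) (Icc 0 t) :=
        eVariationOn.congr fun x hx => brokenLine_of_le_half (hx.2.trans ht.2)
    _ = eVariationOn (lineMap a p) (Icc 0 (2 * t)) := by
        rw [eVariationOn.comp_eq_of_monotoneOn _ _ fun _ _ _ _ h => by linarith,
          image_mul_left_Icc zero_le_two ht.1, mul_zero]
    _ ≤ ENNReal.ofReal (2 * t * dist a p) := by
        simpa using eVariationOn_lineMap_Icc_le a p 0 (2 * t)

lemma eVariationOn_brokenLine_Icc_one (a p b : E) (t : ℝ) :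
    eVariationOn (brokenLine a p b) (Icc t 1) =
      eVariationOn (brokenLine b p a) (Icc 0 (1 - t)) := by
  have : brokenLine a p b = brokenLine b p a ∘ (1 - ·) :=
    funext fun s => (brokenLine_one_sub b p a s).symm
  rw [this, eVariationOn.comp_eq_of_antitoneOn _ _ fun _ _ _ _ h => by linarith,
    image_const_sub_Icc, sub_self]

lemma eVariationOn_brokenLine_le (a p b : E) :
    eVariationOn (brokenLine a p b) (Icc 0 1) ≤ ENNReal.ofReal (dist a p + dist p b) := by
  have hsplit := eVariationOn.Icc_add_Icc (brokenLine a p b) (s := univ)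
    (by norm_num : (0 : ℝ) ≤ 1 / 2) (by norm_num : (1 / 2 : ℝ) ≤ 1) (mem_univ _)
  simp only [univ_inter] at hsplit
  rw [← hsplit, eVariationOn_brokenLine_Icc_one, dist_comm p b,
    ENNReal.ofReal_add dist_nonneg dist_nonneg, show (1 : ℝ) - 1 / 2 = 1 / 2 by norm_num]
  gcongr
  · simpa using eVariationOn_brokenLine_Icc_zero_le (a := a) (p := p) (b := b) (t := 1 / 2)
      ⟨by norm_num, le_rfl⟩
  · simpa using eVariationOn_brokenLine_Icc_zero_le (a := b) (p := p) (b := a) (t := 1 / 2)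
      ⟨by norm_num, le_rfl⟩

lemma eVariationOn_brokenLine_Icc_zero_le_mul_infDist {x₀ : E} {r c : ℝ} (hc : 0 ≤ c)
    (ha : a ∈ ball x₀ r) (hap : dist a p ≤ c * (r - dist p x₀)) (ht : t ∈ Icc 0 (1 / 2)) :
    eVariationOn (brokenLine a p b) (Icc 0 t) ≤
      ENNReal.ofReal (c * infDist (brokenLine a p b t) (ball x₀ r)ᶜ) := by
  rcases subsingleton_or_nontrivial E with hE | hE
  · simp [eVariationOn_of_subsingleton]
  refine (eVariationOn_brokenLine_Icc_zero_le ht).trans (ENNReal.ofReal_le_ofReal ?_)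
  have h2t : 0 ≤ 2 * t := by linarith [ht.1]
  have hseg := mul_sub_dist_le_sub_dist_lineMap (p := p) (mem_ball.1 ha).le h2t
    (by linarith [ht.2])
  have hinf := sub_dist_le_infDist_compl_ball x₀ (lineMap a p (2 * t) : E)
    (dist_nonneg.trans (mem_ball.1 ha).le)
  rw [brokenLine_of_le_half ht.2]
  calc 2 * t * dist a p ≤ 2 * t * (c * (r - dist p x₀)) := by gcongr
    _ = c * (2 * t * (r - dist p x₀)) := by ring
    _ ≤ c * infDist (lineMap a p (2 * t)) (ball x₀ r)ᶜ := by gcongr; exact hseg.trans hinf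

end BrokenLine

section Pivot

variable {E : Type*} [NormedAddCommGroup E] [InnerProductSpace ℝ E]

lemma dist_add_dist_le_of_dist_midpoint_le {a b p : E} {c k : ℝ} (hc₀ : 0 ≤ c)
    (hck : c ^ 2 = 1 + k ^ 2) (hp : dist p (midpoint ℝ a b) ≤ k * (dist a b / 2)) :
    dist a p + dist p b ≤ c * dist a b := by
  have hapollonius :=
    EuclideanGeometry.dist_sq_add_dist_sq_eq_two_mul_dist_midpoint_sq_add_half_dist_sq p a b
  have hp2 : dist p (midpoint ℝ a b) ^ 2 ≤ (k * (dist a b / 2)) ^ 2 :=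
    pow_le_pow_left₀ dist_nonneg hp 2
  rw [dist_comm a p]
  nlinarith [sq_nonneg (dist p a - dist p b), dist_nonneg (x := p) (y := a),
    dist_nonneg (x := p) (y := b), mul_nonneg hc₀ (dist_nonneg (x := a) (y := b))]

lemma dist_lineMap_le_mul_sub_dist {a m x₀ : E} {r c k t : ℝ} (hc₀ : 0 ≤ c)
    (hck : c ^ 2 = 1 + k ^ 2) (hk : 1 ≤ k) (ha : dist a x₀ ≤ r) (hm : dist m x₀ ≤ r)
    (ht₀ : 0 ≤ t) (ht₁ : t ≤ 1) (htk : t * dist m x₀ = k * dist a m) :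
    dist a (lineMap m x₀ t) ≤ c * (r - dist (lineMap m x₀ t) x₀) := by
  set v := a - m
  set w := x₀ - m
  have hρ : dist a m = ‖v‖ := dist_eq_norm a m
  have hd : dist m x₀ = ‖w‖ := dist_comm m x₀ ▸ dist_eq_norm x₀ m
  have hap : dist a (lineMap m x₀ t) ^ 2 = ‖v‖ ^ 2 - 2 * (t * ⟪v, w⟫) + (t * ‖w‖) ^ 2 := by
    rw [dist_eq_norm, show a - lineMap m x₀ t = v - t • w by
      simp only [v, w, lineMap_apply_module']; abel, norm_sub_sq_real, real_inner_smul_right,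
      norm_smul, Real.norm_eq_abs, abs_of_nonneg ht₀]
  have hax : dist a x₀ ^ 2 = ‖v‖ ^ 2 - 2 * ⟪v, w⟫ + ‖w‖ ^ 2 := by
    rw [dist_eq_norm, show a - x₀ = v - w by simp only [v, w]; abel, norm_sub_sq_real]
  have hpx : dist (lineMap m x₀ t) x₀ = ‖w‖ - k * ‖v‖ := by
    rw [dist_lineMap_right, Real.norm_eq_abs, abs_of_nonneg (sub_nonneg.2 ht₁), ← hρ, ← htk, hd]
    ring
  rw [hρ, hd] at htk
  rw [hd] at hm
  rw [hpx]
  set ρ := ‖v‖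
  set d := ‖w‖
  have hs : 0 ≤ r - d := sub_nonneg.2 hm
  have hkρ : 0 ≤ k * ρ := by positivity
  have hinner : -2 * ⟪v, w⟫ ≤ (r - d) ^ 2 + 2 * (r - d) * d := by
    nlinarith [pow_le_pow_left₀ dist_nonneg ha 2, sq_nonneg ρ]
  have hcross : -2 * (t * ⟪v, w⟫) ≤ (r - d) ^ 2 + 2 * (r - d) * (k * ρ) := by
    nlinarith [mul_le_mul_of_nonneg_left hinner ht₀,
      mul_nonneg (sub_nonneg.2 ht₁) (sq_nonneg (r - d))]
  have hk₂ : 0 ≤ (1 + k ^ 2) * (k ^ 2 - 1) := mul_nonneg (by positivity) (by nlinarith)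
  have hsq : dist a (lineMap m x₀ t) ^ 2 ≤ (c * (r - (d - k * ρ))) ^ 2 := by
    rw [hap, htk, mul_pow c, hck]
    nlinarith [mul_nonneg (mul_nonneg hkρ hs) (by linarith : (0:ℝ) ≤ k),
      mul_nonneg (sq_nonneg ρ) hk₂, sq_nonneg (k * (r - d))]
  exact (pow_le_pow_iff_left₀ dist_nonneg (mul_nonneg hc₀ (by linarith)) two_ne_zero).1 hsq

lemma exists_pivot_mem_ball {x₀ z₁ z₂ : E} {r c : ℝ} (hc : √2 ≤ c) (h₁ : z₁ ∈ ball x₀ r)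
    (h₂ : z₂ ∈ ball x₀ r) :
    ∃ p ∈ ball x₀ r, dist z₁ p + dist p z₂ ≤ c * dist z₁ z₂ ∧
      dist z₁ p ≤ c * (r - dist p x₀) ∧ dist z₂ p ≤ c * (r - dist p x₀) := by
  have hc₀ : 0 ≤ c := (Real.sqrt_nonneg 2).trans hc
  have hc₂ : 2 ≤ c ^ 2 := (Real.sqrt_le_left hc₀).1 hc
  set k := √(c ^ 2 - 1)
  have hck : c ^ 2 = 1 + k ^ 2 := by rw [Real.sq_sqrt (by linarith)]; ring
  have hk : 1 ≤ k := (Real.le_sqrt zero_le_one (by linarith)).2 (by linarith)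
  have hr : 0 < r := pos_of_mem_ball h₁
  set m := midpoint ℝ z₁ z₂
  set ρ := dist z₁ z₂ / 2
  have hρ₁ : dist z₁ m = ρ := by
    rw [dist_left_midpoint, Real.norm_two]; ring
  have hρ₂ : dist z₂ m = ρ := by
    rw [dist_right_midpoint, Real.norm_two]; ring
  have hm : m ∈ ball x₀ r := (convex_ball x₀ r).midpoint_mem h₁ h₂
  rcases le_or_gt (dist m x₀) (k * ρ) with hnear | hfar
  · have hcr : r ≤ c * r := le_mul_of_one_le_left hr.le (by nlinarith)
    refine ⟨x₀, mem_ball_self hr,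
      dist_add_dist_le_of_dist_midpoint_le hc₀ hck (by rwa [dist_comm]), ?_, ?_⟩ <;>
    rw [dist_self, sub_zero]
    exacts [(mem_ball.1 h₁).le.trans hcr, (mem_ball.1 h₂).le.trans hcr]
  · have hd : 0 < dist m x₀ := (by positivity : 0 ≤ k * ρ).trans_lt hfar
    set t := k * ρ / dist m x₀
    have htk : t * dist m x₀ = k * ρ := div_mul_cancel₀ _ hd.ne'
    have ht₀ : 0 ≤ t := by positivity
    have ht₁ : t ≤ 1 := (div_le_one hd).2 hfar.le
    refine ⟨lineMap m x₀ t, (convex_ball x₀ r).lineMap_mem hm (mem_ball_self hr) ⟨ht₀, ht₁⟩,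
      dist_add_dist_le_of_dist_midpoint_le hc₀ hck ?_, ?_, ?_⟩
    · rw [dist_lineMap_left, Real.norm_of_nonneg ht₀, htk]
    · exact dist_lineMap_le_mul_sub_dist hc₀ hck hk (mem_ball.1 h₁).le (mem_ball.1 hm).le
        ht₀ ht₁ (hρ₁ ▸ htk)
    · exact dist_lineMap_le_mul_sub_dist hc₀ hck hk (mem_ball.1 h₂).le (mem_ball.1 hm).le
        ht₀ ht₁ (hρ₂ ▸ htk)

end Pivot

theorem exists_uniform_arc_in_ball {E : Type*} [NormedAddCommGroup E] [InnerProductSpace ℝ E]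
    {x₀ z₁ z₂ : E} {r c : ℝ} (hc : √2 ≤ c) (h₁ : z₁ ∈ ball x₀ r) (h₂ : z₂ ∈ ball x₀ r) :
    ∃ γ : ℝ → E, ContinuousOn γ (Icc 0 1) ∧ γ 0 = z₁ ∧ γ 1 = z₂ ∧
      (∀ t ∈ Icc (0:ℝ) 1, γ t ∈ ball x₀ r) ∧
      eVariationOn γ (Icc 0 1) ≤ ENNReal.ofReal (c * dist z₁ z₂) ∧
      ∀ t ∈ Icc (0:ℝ) 1,
        min (eVariationOn γ (Icc 0 t)) (eVariationOn γ (Icc t 1)) ≤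
          ENNReal.ofReal (c * infDist (γ t) (ball x₀ r)ᶜ) := by
  obtain ⟨p, hp, hsum, hcone₁, hcone₂⟩ := exists_pivot_mem_ball hc h₁ h₂
  have hc₀ : 0 ≤ c := (Real.sqrt_nonneg 2).trans hc
  refine ⟨brokenLine z₁ p z₂, (continuous_brokenLine z₁ p z₂).continuousOn,
    brokenLine_zero z₁ p z₂, brokenLine_one z₁ p z₂,
    fun t ht => brokenLine_mem (convex_ball x₀ r) h₁ hp h₂ ht,
    (eVariationOn_brokenLine_le z₁ p z₂).trans (ENNReal.ofReal_le_ofReal hsum), ?_⟩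
  rintro t ⟨ht₀, ht₁⟩
  rcases le_total t (1 / 2) with ht | ht
  · exact (min_le_left _ _).trans
      (eVariationOn_brokenLine_Icc_zero_le_mul_infDist hc₀ h₁ hcone₁ ⟨ht₀, ht⟩)
  · refine (min_le_right _ _).trans ?_
    rw [eVariationOn_brokenLine_Icc_one, ← brokenLine_one_sub z₂ p z₁ t]
    exact eVariationOn_brokenLine_Icc_zero_le_mul_infDist hc₀ h₂ hcone₂
      ⟨by linarith, by linarith⟩

theorem stmt19_general {n : ℕ} (x₀ : EuclideanSpace ℝ (Fin n)) (r : ℝ) :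
    ∀ z₁ ∈ ball x₀ r, ∀ z₂ ∈ ball x₀ r, ∃ γ : ℝ → EuclideanSpace ℝ (Fin n),
      ContinuousOn γ (Icc 0 1) ∧ γ 0 = z₁ ∧ γ 1 = z₂ ∧
      (∀ t ∈ Icc (0:ℝ) 1, γ t ∈ ball x₀ r) ∧
      eVariationOn γ (Icc 0 1) ≤ ENNReal.ofReal (Real.pi / 2 * dist z₁ z₂) ∧
      ∀ t ∈ Icc (0:ℝ) 1,
        min (eVariationOn γ (Icc 0 t)) (eVariationOn γ (Icc t 1)) ≤
          ENNReal.ofReal (Real.pi / 2 * infDist (γ t) (ball x₀ r)ᶜ) := by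
  have hc : √2 ≤ Real.pi / 2 :=
    (Real.sqrt_le_left (by positivity)).2 (by nlinarith [Real.pi_gt_three])
  exact fun z₁ h₁ z₂ h₂ => exists_uniform_arc_in_ball hc h₁ h₂

/-- Every open ball in `ℝⁿ` is a `π/2`-uniform domain. -/
theorem stmt19 {n : ℕ} (x₀ : EuclideanSpace ℝ (Fin n)) (r : ℝ) (hr : 0 < r) :
    ∀ z₁ ∈ ball x₀ r, ∀ z₂ ∈ ball x₀ r, ∃ γ : ℝ → EuclideanSpace ℝ (Fin n),
      ContinuousOn γ (Icc 0 1) ∧ γ 0 = z₁ ∧ γ 1 = z₂ ∧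
      (∀ t ∈ Icc (0:ℝ) 1, γ t ∈ ball x₀ r) ∧
      eVariationOn γ (Icc 0 1) ≤ ENNReal.ofReal (Real.pi / 2 * dist z₁ z₂) ∧
      ∀ t ∈ Icc (0:ℝ) 1,
        min (eVariationOn γ (Icc 0 t)) (eVariationOn γ (Icc t 1)) ≤
          ENNReal.ofReal (Real.pi / 2 * infDist (γ t) (ball x₀ r)ᶜ) :=
  stmt19_general x₀ r
end
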